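/- Let A be a diagonalizable n×n complex matrix and let B be an n×n complex matrix of rank one. If C = A + B, then the number of distinct eigenvalues of C satisfies |Λ(C)| ≤ 2·|Λ(A)|. -/

import Mathlib

/-!
Write `k = |Λ(A)|` and `r = rank B`. For every `λ`, the subspace `ker (A - λ) ∩ ker B` has
codimension at most `r` in `ker (A - λ)` and lies in `ker (C - λ)`; as geometric multiplicity
bounds algebraic multiplicity and the eigenspaces of the diagonalizable `A` fill `ℂⁿ`, the
eigenvalues of `A` carry algebraic multiplicity at least `n - r k` as eigenvalues of `C`.
The remaining eigenvalues of `C` therefore have total multiplicity at most `r k`, so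
`|Λ(C)| ≤ (r + 1) k`.
-/

open Matrix Polynomial Module

/-- The set of distinct eigenvalues of a matrix: the roots of its characteristic polynomial. -/
noncomputable def eigSet {n : ℕ} (M : Matrix (Fin n) (Fin n) ℂ) : Finset ℂ :=
  M.charpoly.roots.toFinset

/-- Algebraic multiplicity of `μ` as an eigenvalue of `M` (multiplicity as a root of the
characteristic polynomial; `0` if `μ` is not an eigenvalue). -/
noncomputable def algMult {n : ℕ} (M : Matrix (Fin n) (Fin n) ℂ) (μ : ℂ) : ℕ :=
  M.charpoly.rootMultiplicity μ

/-- Geometric multiplicity of `μ` as an eigenvalue of `M`: the dimension of `ker (M - μ I)`. -/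
noncomputable def geomMult {n : ℕ} (M : Matrix (Fin n) (Fin n) ℂ) (μ : ℂ) : ℕ :=
  Module.finrank ℂ (LinearMap.ker (M - μ • (1 : Matrix (Fin n) (Fin n) ℂ)).mulVecLin)

/-- The defectivity of a matrix: the sum over its distinct eigenvalues of the differences
between algebraic and geometric multiplicities. -/
noncomputable def defect {n : ℕ} (M : Matrix (Fin n) (Fin n) ℂ) : ℕ :=
  ∑ μ ∈ eigSet M, (algMult M μ - geomMult M μ)

/-- A matrix is diagonalizable if it is similar to a diagonal matrix. -/
def IsDiagonalizable {n : ℕ} (M : Matrix (Fin n) (Fin n) ℂ) : Prop :=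
  ∃ P D : Matrix (Fin n) (Fin n) ℂ, IsUnit P ∧ D.IsDiag ∧ M = P * D * P⁻¹

lemma LinearMap.finrank_ker_le_finrank_ker_add_add_finrank_range {K V W : Type*} [Field K]
    [AddCommGroup V] [Module K V] [FiniteDimensional K V] [AddCommGroup W] [Module K W]
    (f g : V →ₗ[K] W) : finrank K (ker f) ≤ finrank K (ker (f + g)) + finrank K (range g) := by
  have hinf : ker f ⊓ ker g ≤ ker (f + g) := fun x hx => by
    simp_all [Submodule.mem_inf]
  have hsup_inf := Submodule.finrank_sup_add_finrank_inf_eq (ker f) (ker g)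
  have hsup_le := Submodule.finrank_le (ker f ⊔ ker g)
  have hrank_nullity := g.finrank_range_add_finrank_ker
  have hinf_le := Submodule.finrank_mono hinf
  omega

lemma Matrix.mulVec_col_eq_smul_of_mul_eq_mul_diagonal {R m : Type*} [CommSemiring R]
    [Fintype m] [DecidableEq m] {A P : Matrix m m R} {d : m → R} (h : A * P = P * diagonal d)
    (j : m) : A *ᵥ P.col j = d j • P.col j := by
  ext i
  have hij := congrFun (congrFun h i) j
  rw [mul_diagonal, mul_apply] at hij
  simpa [mulVec, dotProduct, mul_comm] using hij

section

variable {n : ℕ}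

lemma ker_mulVecLin_sub_smul_one_eq_eigenspace (M : Matrix (Fin n) (Fin n) ℂ) (μ : ℂ) :
    LinearMap.ker (M - μ • (1 : Matrix (Fin n) (Fin n) ℂ)).mulVecLin =
      Module.End.eigenspace M.mulVecLin μ := by
  rw [Module.End.eigenspace_def]
  congr 1
  exact LinearMap.ext fun v => by simp

lemma geomMult_le_algMult (M : Matrix (Fin n) (Fin n) ℂ) (μ : ℂ) :
    geomMult M μ ≤ algMult M μ := by
  rw [geomMult, algMult, ker_mulVecLin_sub_smul_one_eq_eigenspace, ← Matrix.charpoly_mulVecLin]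
  exact LinearMap.finrank_eigenspace_le _ _

lemma mem_eigSet_iff_algMult_pos {M : Matrix (Fin n) (Fin n) ℂ} {μ : ℂ} :
    μ ∈ eigSet M ↔ 0 < algMult M μ := by
  rw [eigSet, algMult, Multiset.mem_toFinset, mem_roots M.charpoly_monic.ne_zero,
    rootMultiplicity_pos M.charpoly_monic.ne_zero]

lemma mem_eigSet_of_geomMult_pos {M : Matrix (Fin n) (Fin n) ℂ} {μ : ℂ} (h : 0 < geomMult M μ) :
    μ ∈ eigSet M :=
  mem_eigSet_iff_algMult_pos.2 (h.trans_le (geomMult_le_algMult M μ))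

lemma sum_algMult_eigSet (M : Matrix (Fin n) (Fin n) ℂ) : ∑ μ ∈ eigSet M, algMult M μ = n := by
  simp_rw [eigSet, algMult, ← count_roots, Multiset.toFinset_sum_count_eq,
    IsAlgClosed.card_roots_eq_natDegree, charpoly_natDegree_eq_dim, Fintype.card_fin]

lemma geomMult_le_geomMult_add_add_rank (A B : Matrix (Fin n) (Fin n) ℂ) (μ : ℂ) :
    geomMult A μ ≤ geomMult (A + B) μ + B.rank := by
  rw [geomMult, geomMult, add_sub_right_comm, mulVecLin_add]
  exact LinearMap.finrank_ker_le_finrank_ker_add_add_finrank_range _ _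

lemma IsDiagonalizable.card_le_sum_geomMult {A : Matrix (Fin n) (Fin n) ℂ}
    (hA : IsDiagonalizable A) : n ≤ ∑ μ ∈ eigSet A, geomMult A μ := by
  obtain ⟨P, D, hP, hD, rfl⟩ := hA
  obtain ⟨d, rfl⟩ : ∃ d, D = diagonal d := ⟨D.diag, hD.diagonal_diag.symm⟩
  set A := P * diagonal d * P⁻¹
  have hAP : A * P = P * diagonal d := by
    rw [Matrix.mul_assoc, nonsing_inv_mul _ ((isUnit_iff_isUnit_det P).1 hP), Matrix.mul_one]
  have hcols (μ : ℂ) : (Finset.univ.filter (d · = μ)).card ≤ geomMult A μ := by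
    have hli : LinearIndependent ℂ fun j : {j // d j = μ} => P.col j :=
      (linearIndependent_cols_of_isUnit hP).comp _ Subtype.val_injective
    rw [← Fintype.card_subtype, ← finrank_span_eq_card hli, geomMult]
    refine Submodule.finrank_mono (Submodule.span_le.2 ?_)
    rintro _ ⟨⟨j, rfl⟩, rfl⟩
    rw [SetLike.mem_coe, LinearMap.mem_ker, mulVecLin_apply, sub_mulVec,
      mulVec_col_eq_smul_of_mul_eq_mul_diagonal hAP, smul_mulVec, one_mulVec, sub_self]
  have hmaps : Set.MapsTo d ↑(Finset.univ : Finset (Fin n)) ↑(eigSet A) := fun j _ =>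
    mem_eigSet_of_geomMult_pos ((Finset.card_pos.2 ⟨j, by simp⟩).trans_le (hcols _))
  calc n = ∑ μ ∈ eigSet A, (Finset.univ.filter (d · = μ)).card := by
        simpa using Finset.card_eq_sum_card_fiberwise hmaps
    _ ≤ _ := Finset.sum_le_sum fun μ _ => hcols μ

lemma card_eigSet_le_card_add_of_le_sum_algMult (M : Matrix (Fin n) (Fin n) ℂ) (S : Finset ℂ)
    (m : ℕ) (h : n ≤ ∑ μ ∈ S, algMult M μ + m) : (eigSet M).card ≤ S.card + m := by
  have hsplit : ∑ μ ∈ eigSet M \ S, algMult M μ + ∑ μ ∈ S, algMult M μ = n := by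
    rw [← Finset.sum_union Finset.sdiff_disjoint, Finset.sdiff_union_self_eq_union,
      ← Finset.sum_subset Finset.subset_union_left, sum_algMult_eigSet]
    exact fun μ _ hμ => Nat.eq_zero_of_not_pos (mt mem_eigSet_iff_algMult_pos.2 hμ)
  have hcard : (eigSet M \ S).card ≤ ∑ μ ∈ eigSet M \ S, algMult M μ := by
    simpa using Finset.card_nsmul_le_sum (eigSet M \ S) (algMult M) 1 fun μ hμ =>
      mem_eigSet_iff_algMult_pos.1 (Finset.mem_sdiff.1 hμ).1
  calc (eigSet M).card ≤ (eigSet M \ S).card + S.card := Finset.card_le_card_sdiff_add_card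
    _ ≤ S.card + m := by omega

lemma IsDiagonalizable.card_eigSet_add_le {A : Matrix (Fin n) (Fin n) ℂ} (hA : IsDiagonalizable A)
    (B : Matrix (Fin n) (Fin n) ℂ) :
    (eigSet (A + B)).card ≤ (B.rank + 1) * (eigSet A).card := by
  have hmult : n ≤ ∑ μ ∈ eigSet A, algMult (A + B) μ + B.rank * (eigSet A).card :=
    calc n ≤ ∑ μ ∈ eigSet A, geomMult A μ := hA.card_le_sum_geomMult
      _ ≤ ∑ μ ∈ eigSet A, (algMult (A + B) μ + B.rank) := Finset.sum_le_sum fun μ _ =>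
          (geomMult_le_geomMult_add_add_rank A B μ).trans
            (Nat.add_le_add_right (geomMult_le_algMult _ _) _)
      _ = _ := by rw [Finset.sum_add_distrib, Finset.sum_const, smul_eq_mul, mul_comm]
  calc (eigSet (A + B)).card ≤ (eigSet A).card + B.rank * (eigSet A).card :=
        card_eigSet_le_card_add_of_le_sum_algMult _ _ _ hmult
    _ = (B.rank + 1) * (eigSet A).card := by ring
end

/-- a rank one update of a diagonalizable matrix at most doubles the
number of distinct eigenvalues. -/
theorem distinct_eigenvalues_rank_one_update_diagonalizable {n : ℕ}
    (A B C : Matrix (Fin n) (Fin n) ℂ) (hA : IsDiagonalizable A)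
    (hB : B.rank = 1) (hC : C = A + B) :
    (eigSet C).card ≤ 2 * (eigSet A).card := by
  simpa [hC, hB] using hA.card_eigSet_add_le B
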